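/- arXiv:1303.4372 — 2 statements merged into one kernel-verified Lean document; each statement's English description precedes it below -/
import Mathlib

section
/- Assume the distribution P_X of X = (X₁,...,X_p) is equivalent to the product ⊗ᵢ₌₁ᵖ P_{X_i}. Then the Gram matrix A_φ, whose block entries are E[Φ_u(X_u)·ᵗΦ_v(X_v)] for u,v ∈ S^d, where Φ_u collects the hierarchically orthogonal basis functions (φ_{l_u}^u) of H_u^{0,L} constructed by the HOGS procedure, is nonsingular (positive definite). -/
open MeasureTheory

/-- Support of a multi-index `l`. -/
def suppOf {p : ℕ} {L : Fin p → ℕ} (l : (i : Fin p) → Fin (L i + 1)) : Finset (Fin p) :=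
  Finset.univ.filter fun i => l i ≠ 0

/-- Tensor-product function `x ↦ ∏ᵢ ψ_{l i}^i(x i)` (with `ψ_0^i = 1`). -/
noncomputable def tensorFun {p : ℕ} (ψ : (i : Fin p) → ℕ → ℝ → ℝ) {L : Fin p → ℕ}
    (l : (i : Fin p) → Fin (L i + 1)) : (Fin p → ℝ) → ℝ :=
  fun x => ∏ i, ψ i (l i) (x i)

/-! Under the product measure `ν = ⊗ μᵢ` the tensor products `T_l` are orthonormal in `L²(ν)`,
and each `φ_l` differs from `T_l` by a combination of tensor products of strictly smaller
support. Pairing a vanishing combination `∑ c_l φ_l` with `T_l` for an `l` of maximal support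
among the nonzero coefficients isolates `c_l`, so the `φ_l` are linearly independent in `L²(ν)`.
Since `ν ≪ P_X`, a combination vanishing `P_X`-a.e. vanishes `ν`-a.e., so the `φ_l` stay
linearly independent in `L²(P_X)`, and their Gram matrix is positive definite. -/

open RealInnerProductSpace

namespace MeasureTheory.MemLp

variable {α E : Type*} [MeasurableSpace α] {μ ν : Measure α}

theorem inner_toLp_toLp {f g : α → ℝ} (hf : MemLp f 2 μ) (hg : MemLp g 2 μ) :
    ⟪hf.toLp f, hg.toLp g⟫ = ∫ x, f x * g x ∂μ := by
  rw [L2.inner_def]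
  refine integral_congr_ae ?_
  filter_upwards [hf.coeFn_toLp, hg.coeFn_toLp] with x hfx hgx
  simp [hfx, hgx, mul_comm]

variable {𝕜 : Type*} [NormedField 𝕜] [NormedAddCommGroup E] [NormedSpace 𝕜 E]
  {p : ENNReal}

theorem coeFn_sum_smul_toLp {ι : Type*} (s : Finset ι) (c : ι → 𝕜) {f : ι → α → E}
    (hf : ∀ a, MemLp (f a) p μ) :
    ⇑(∑ a ∈ s, c a • (hf a).toLp (f a)) =ᵐ[μ] ∑ a ∈ s, c a • f a := by
  classical
  induction s using Finset.induction with
  | empty => simpa using Lp.coeFn_zero E p μ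
  | insert a s has ih =>
    simp only [Finset.sum_insert has]
    filter_upwards [Lp.coeFn_add (c a • (hf a).toLp (f a)) (∑ b ∈ s, c b • (hf b).toLp (f b)),
      Lp.coeFn_smul (c a) ((hf a).toLp (f a)), (hf a).coeFn_toLp, ih] with x h₁ h₂ h₃ h₄
    simp only [h₁, Pi.add_apply, h₂, Pi.smul_apply, h₃, h₄]

theorem linearIndependent_toLp_iff {ι : Type*} [Fintype ι] {f : ι → α → E}
    (hf : ∀ a, MemLp (f a) p μ) :
    LinearIndependent 𝕜 (fun a => (hf a).toLp (f a)) ↔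
      ∀ c : ι → 𝕜, ∑ a, c a • f a =ᵐ[μ] 0 → c = 0 := by
  rw [Fintype.linearIndependent_iff]
  refine forall_congr' fun c => ?_
  rw [← Lp.eq_zero_iff_ae_eq_zero.trans
    ⟨(coeFn_sum_smul_toLp _ c hf).symm.trans, (coeFn_sum_smul_toLp _ c hf).trans⟩, funext_iff]
  rfl

theorem linearIndependent_toLp_of_absolutelyContinuous {ι : Type*} [Fintype ι]
    {f : ι → α → E} (hμ : ∀ a, MemLp (f a) p μ) (hν : ∀ a, MemLp (f a) p ν) (hνμ : ν ≪ μ)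
    (h : LinearIndependent 𝕜 fun a => (hν a).toLp (f a)) :
    LinearIndependent 𝕜 fun a => (hμ a).toLp (f a) :=
  (linearIndependent_toLp_iff hμ).2 fun c hc =>
    (linearIndependent_toLp_iff hν).1 h c (hνμ.ae_le hc)

theorem exists_toLp_mem_span {ι : Type*} {u : ι → α → E} (hu : ∀ i, MemLp (u i) p μ)
    {s : Set ι} {g : α → E} (hg : g ∈ Submodule.span 𝕜 (u '' s)) :
    ∃ hg' : MemLp g p μ,
      hg'.toLp g ∈ Submodule.span 𝕜 ((fun i => (hu i).toLp (u i)) '' s) := by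
  induction hg using Submodule.span_induction with
  | mem g hg =>
    obtain ⟨i, hi, rfl⟩ := hg
    exact ⟨hu i, Submodule.subset_span ⟨i, hi, rfl⟩⟩
  | zero => exact ⟨.zero, by simp [toLp_zero]⟩
  | add f g _ _ hf hg =>
    obtain ⟨hf, hfs⟩ := hf
    obtain ⟨hg, hgs⟩ := hg
    exact ⟨hf.add hg, by rw [toLp_add hf hg]; exact add_mem hfs hgs⟩
  | smul c f _ hf =>
    obtain ⟨hf, hfs⟩ := hf
    exact ⟨hf.const_smul c, by rw [toLp_const_smul c hf]; exact Submodule.smul_mem _ c hfs⟩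

end MeasureTheory.MemLp

section Triangular

variable {𝕜 E ι κ α : Type*} [RCLike 𝕜] [NormedAddCommGroup E] [InnerProductSpace 𝕜 E]

theorem Orthonormal.inner_eq_zero_of_mem_span {e : ι → E} (he : Orthonormal 𝕜 e) {s : Set ι}
    {i : ι} (hi : i ∉ s) {w : E} (hw : w ∈ Submodule.span 𝕜 (e '' s)) : inner 𝕜 (e i) w = 0 := by
  obtain ⟨l, hl, rfl⟩ := (Finsupp.mem_span_image_iff_linearCombination 𝕜).1 hw
  exact inner_eq_zero_symm.1 (he.inner_finsupp_eq_zero hi hl)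

theorem Orthonormal.linearIndependent_of_sub_mem_span [Preorder α] [Finite κ] {e : ι → E}
    (he : Orthonormal 𝕜 e) (r : ι → α) {j : κ → ι} (hj : Function.Injective j) {v : κ → E}
    (hv : ∀ k, v k - e (j k) ∈ Submodule.span 𝕜 (e '' {i | r i < r (j k)})) :
    LinearIndependent 𝕜 v := by
  classical
  have := Fintype.ofFinite κ
  rw [Fintype.linearIndependent_iff]
  by_contra! h
  obtain ⟨c, hc, k, hk⟩ := h
  obtain ⟨k₀, hk₀mem, hmax⟩ := Finset.exists_maximalFor (r ∘ j) {k | c k ≠ 0} ⟨k, by simpa⟩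
  have hk₀ : c k₀ ≠ 0 := by simpa using hk₀mem
  have hpair : ∀ k, c k ≠ 0 → inner 𝕜 (e (j k₀)) (v k) = if k₀ = k then 1 else 0 := by
    intro k hk
    have hnot : j k₀ ∉ {i | r i < r (j k)} := fun hlt =>
      hlt.not_ge (hmax (by simpa using hk) hlt.le)
    rw [← sub_add_cancel (v k) (e (j k)), inner_add_right,
      he.inner_eq_zero_of_mem_span hnot (hv k), zero_add, orthonormal_iff_ite.1 he,
      hj.eq_iff]
  have hsum : inner 𝕜 (e (j k₀)) (∑ k, c k • v k) = c k₀ := by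
    rw [inner_sum, Finset.sum_eq_single k₀]
    · simp [inner_smul_right, hpair k₀ hk₀]
    · intro k _ hne
      by_cases hck : c k = 0
      · simp [hck]
      · simp [inner_smul_right, hpair k hck, hne.symm]
    · simp
  rw [hc, inner_zero_right] at hsum
  exact hk₀ hsum.symm

end Triangular

section TensorProducts

variable {p : ℕ} (μi : Fin p → Measure ℝ) [∀ i, SigmaFinite (μi i)] (ψ : (i : Fin p) → ℕ → ℝ → ℝ)
  {L : Fin p → ℕ}

theorem integral_tensorFun_mul_tensorFun (l m : (i : Fin p) → Fin (L i + 1)) :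
    ∫ x, tensorFun ψ l x * tensorFun ψ m x ∂Measure.pi μi =
      ∏ i, ∫ t, ψ i (l i) t * ψ i (m i) t ∂μi i := by
  simp only [tensorFun, ← Finset.prod_mul_distrib]
  exact integral_fintype_prod_eq_prod (fun i t => ψ i (l i) t * ψ i (m i) t)

variable {μi ψ}

theorem memLp_tensorFun {l : (i : Fin p) → Fin (L i + 1)} (hmeas : ∀ i, Measurable (ψ i (l i)))
    (hsq : ∀ i, Integrable (fun t => ψ i (l i) t ^ 2) (μi i)) :
    MemLp (tensorFun ψ l) 2 (Measure.pi μi) := by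
  have hT : Measurable (tensorFun ψ l) :=
    Finset.measurable_prod _ fun i _ => (hmeas i).comp (measurable_pi_apply i)
  rw [memLp_two_iff_integrable_sq hT.aestronglyMeasurable]
  simpa only [tensorFun, ← Finset.prod_pow] using Integrable.fintype_prod_dep hsq

theorem orthonormal_tensorFun_toLp (hT : ∀ l : (i : Fin p) → Fin (L i + 1),
      MemLp (tensorFun ψ l) 2 (Measure.pi μi))
    (hortho : ∀ i (a b : Fin (L i + 1)),
      ∫ t, ψ i a t * ψ i b t ∂μi i = if (a : ℕ) = b then 1 else 0) :
    Orthonormal ℝ fun l => (hT l).toLp (tensorFun ψ l) := by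
  classical
  rw [orthonormal_iff_ite]
  intro l m
  rw [MemLp.inner_toLp_toLp, integral_tensorFun_mul_tensorFun]
  simp [hortho, Fin.val_inj, Fintype.prod_boole, funext_iff]

theorem exists_toLp_mem_span_tensorFun {ν : Measure (Fin p → ℝ)}
    (hT : ∀ l : (i : Fin p) → Fin (L i + 1), MemLp (tensorFun ψ l) 2 ν)
    {l : (i : Fin p) → Fin (L i + 1)} {g : (Fin p → ℝ) → ℝ}
    (hg : g ∈ Submodule.span ℝ
      {g | ∃ m : (i : Fin p) → Fin (L i + 1), suppOf m ⊂ suppOf l ∧ g = tensorFun ψ m}) :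
    ∃ hg' : MemLp g 2 ν, hg'.toLp g ∈ Submodule.span ℝ
      ((fun m => (hT m).toLp (tensorFun ψ m)) '' {m | suppOf m < suppOf l}) := by
  have hset : tensorFun ψ '' {m : (i : Fin p) → Fin (L i + 1) | suppOf m < suppOf l} =
      {g | ∃ m : (i : Fin p) → Fin (L i + 1), suppOf m ⊂ suppOf l ∧ g = tensorFun ψ m} := by
    ext g
    simp only [Set.mem_image, Set.mem_ofPred_eq, eq_comm (a := g)]
  exact MemLp.exists_toLp_mem_span hT (hset ▸ hg)

end TensorProducts

theorem hogs_gram_matrix_posDef_general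
    {p : ℕ} (d : ℕ)
    (μi : Fin p → Measure ℝ) [∀ i, IsProbabilityMeasure (μi i)]
    (μ : Measure (Fin p → ℝ))
    (habs' : Measure.pi μi ≪ μ)
    (L : Fin p → ℕ) (ψ : (i : Fin p) → ℕ → ℝ → ℝ)
    (hψmeas : ∀ i n, Measurable (ψ i n))
    (hortho : ∀ i, ∀ a ≤ L i, ∀ b ≤ L i,
      ∫ t, ψ i a t * ψ i b t ∂(μi i) = if a = b then 1 else 0)
    -- the HOGS basis, indexed by multi-indices with nonempty support of size ≤ d
    (φ : {l : (i : Fin p) → Fin (L i + 1) //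
        (suppOf l).Nonempty ∧ (suppOf l).card ≤ d} → (Fin p → ℝ) → ℝ)
    (hφL2 : ∀ l, MemLp (φ l) 2 μ)
    (hφ : ∀ l, (fun x => φ l x - tensorFun ψ l.1 x) ∈
      Submodule.span ℝ {g : (Fin p → ℝ) → ℝ |
        ∃ m : (i : Fin p) → Fin (L i + 1), suppOf m ⊂ suppOf l.1 ∧ g = tensorFun ψ m}) :
    (Matrix.of fun a b => ∫ x, φ a x * φ b x ∂μ).PosDef := by
  have hortho' : ∀ i (a b : Fin (L i + 1)),
      ∫ t, ψ i a t * ψ i b t ∂μi i = if (a : ℕ) = b then 1 else 0 :=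
    fun i a b => hortho i a a.is_le b b.is_le
  have hT : ∀ l : (i : Fin p) → Fin (L i + 1), MemLp (tensorFun ψ l) 2 (Measure.pi μi) :=
    fun l =>
      memLp_tensorFun (fun i => hψmeas i _) fun i =>
        .of_integral_ne_zero (by simp [sq, hortho'])
  choose hcorrL2 hcorrSpan using fun a => exists_toLp_mem_span_tensorFun hT (hφ a)
  have hφν : ∀ a, MemLp (φ a) 2 (Measure.pi μi) := fun a =>
    ((hcorrL2 a).add (hT a.1)).ae_eq (.of_forall fun x => sub_add_cancel _ _)
  have hind : LinearIndependent ℝ fun a => (hφν a).toLp (φ a) :=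
    (orthonormal_tensorFun_toLp hT hortho').linearIndependent_of_sub_mem_span suppOf
      Subtype.val_injective fun a => by rw [← MemLp.toLp_sub]; exact hcorrSpan a
  have hgram : (Matrix.of fun a b => ∫ x, φ a x * φ b x ∂μ) =
      Matrix.gram ℝ fun a => (hφL2 a).toLp (φ a) := by
    ext a b
    exact (MemLp.inner_toLp_toLp _ _).symm
  rw [hgram]
  exact Matrix.posDef_gram_of_linearIndependent
    (MemLp.linearIndependent_toLp_of_absolutelyContinuous hφL2 hφν habs' hind)

/-- if `P_X` is equivalent to `⊗ᵢ P_{X_i}`, the Gram matrix of the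
HOGS basis functions `φ_{l_u}^u` (corrected tensor products: each `φ_l` equals the
tensor product `T_l` plus a linear combination of tensor products with strictly
smaller support, including the constant) over `u ∈ S^d` is positive definite. -/
theorem hogs_gram_matrix_posDef
    {p : ℕ} (d : ℕ)
    (μi : Fin p → Measure ℝ) [∀ i, IsProbabilityMeasure (μi i)]
    (μ : Measure (Fin p → ℝ)) [IsProbabilityMeasure μ]
    (habs : μ ≪ Measure.pi μi) (habs' : Measure.pi μi ≪ μ)
    (L : Fin p → ℕ) (ψ : (i : Fin p) → ℕ → ℝ → ℝ)
    (hψmeas : ∀ i n, Measurable (ψ i n))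
    (hψ0 : ∀ i, ψ i 0 = fun _ => 1)
    (hortho : ∀ i, ∀ a ≤ L i, ∀ b ≤ L i,
      ∫ t, ψ i a t * ψ i b t ∂(μi i) = if a = b then 1 else 0)
    -- Condition (C_prod): square-integrability of the tensor products under `P_X`
    (hT : ∀ l : (i : Fin p) → Fin (L i + 1), MemLp (tensorFun ψ l) 2 μ)
    -- the HOGS basis, indexed by multi-indices with nonempty support of size ≤ d
    (φ : {l : (i : Fin p) → Fin (L i + 1) //
        (suppOf l).Nonempty ∧ (suppOf l).card ≤ d} → (Fin p → ℝ) → ℝ)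
    (hφL2 : ∀ l, MemLp (φ l) 2 μ)
    (hφ : ∀ l, (fun x => φ l x - tensorFun ψ l.1 x) ∈
      Submodule.span ℝ {g : (Fin p → ℝ) → ℝ |
        ∃ m : (i : Fin p) → Fin (L i + 1), suppOf m ⊂ suppOf l.1 ∧ g = tensorFun ψ m}) :
    (Matrix.of fun a b => ∫ x, φ a x * φ b x ∂μ).PosDef :=
  hogs_gram_matrix_posDef_general d μi μ habs' L ψ hψmeas hortho φ hφL2 hφ
end

section
/- For subsets A, B of {1,...,p}: the hierarchically orthogonal components satisfy E[η_u(X_u)·η_v(X_v)] = 0 whenever v ⊂ u (strict inclusion), for η_u ∈ H_u⁰ and η_v ∈ H_v⁰; in particular E[η_u(X_u)] = 0 for every nonempty u, so V(Y) = V(Σ_{u≠∅} η_u) = Σ_{u≠∅} [V(η_u) + Σ_{v: u∩v≠u, u∩v≠v} Cov(η_u, η_v)]. -/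
open MeasureTheory

def DependsOnly {p : ℕ} (f : (Fin p → ℝ) → ℝ) (u : Finset (Fin p)) : Prop :=
  ∀ x y : Fin p → ℝ, (∀ i ∈ u, x i = y i) → f x = f y

/-- The hierarchically orthogonal spaces `H_u⁰`. -/
def HOSpace {p : ℕ} (μ : Measure (Fin p → ℝ)) (u : Finset (Fin p)) :
    Set ((Fin p → ℝ) → ℝ) :=
  {h | Measurable h ∧ MemLp h 2 μ ∧ DependsOnly h u ∧
    ∀ v : Finset (Fin p), v ⊂ u → ∀ g ∈ HOSpace μ v, ∫ x, h x * g x ∂μ = 0}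
termination_by u.card
decreasing_by exact Finset.card_lt_card (by assumption)

noncomputable def rvVar {α : Type*} [MeasurableSpace α] (μ : Measure α) (f : α → ℝ) : ℝ :=
  ∫ x, (f x - ∫ y, f y ∂μ) ^ 2 ∂μ

noncomputable def rvCov {α : Type*} [MeasurableSpace α] (μ : Measure α) (f g : α → ℝ) : ℝ :=
  ∫ x, (f x - ∫ y, f y ∂μ) * (g x - ∫ y, g y ∂μ) ∂μ

/-! Since `H_∅⁰` consists of the constants, orthogonality to it centres every component `η_u`
with `u ≠ ∅`; hence `Cov(η_u, η_v) = E[η_u η_v]`, which vanishes for `v ⊂ u` by hierarchical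
orthogonality, and `Cov(η_∅, ·) = 0`. Expanding `V(Σ_u η_u)` bilinearly, only the diagonal terms
and the pairs with neither set containing the other survive. -/

open ProbabilityTheory

section Covariance

variable {α : Type*} [MeasurableSpace α] {μ : Measure α}

lemma rvCov_eq_covariance (f g : α → ℝ) : rvCov μ f g = cov[f, g; μ] := rfl

lemma rvVar_eq_covariance_self (f : α → ℝ) : rvVar μ f = cov[f, f; μ] := by
  simp only [rvVar, covariance, sq]

lemma ProbabilityTheory.covariance_congr_ae {f f' g g' : α → ℝ} (hf : f =ᵐ[μ] f')
    (hg : g =ᵐ[μ] g') : cov[f, g; μ] = cov[f', g'; μ] := by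
  simp only [covariance, integral_congr_ae hf, integral_congr_ae hg]
  exact integral_congr_ae (hf.mp (hg.mono fun x hgx hfx => by simp only [hfx, hgx]))

end Covariance

lemma Finset.sum_eq_add_sum_filter_incomparable {ι M : Type*} [DecidableEq ι]
    [AddCommMonoid M] (s : Finset (Finset ι)) {u : Finset ι} (hu : u ∈ s) (F : Finset ι → M)
    (hF : ∀ v ∈ s, v ≠ u → (u ⊆ v ∨ v ⊆ u) → F v = 0) :
    ∑ v ∈ s, F v = F u + ∑ v ∈ s.filter (fun v => u ∩ v ≠ u ∧ u ∩ v ≠ v), F v := by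
  rw [← Finset.sum_filter_not_add_sum_filter s (fun v => u ∩ v ≠ u ∧ u ∩ v ≠ v)]
  congr 1
  refine Finset.sum_eq_single_of_mem u (by simp [hu]) fun v hv hvu => ?_
  obtain ⟨hvs, hcomparable⟩ := Finset.mem_filter.mp hv
  rw [not_and_or, not_not, not_not, Finset.inter_eq_left, Finset.inter_eq_right] at hcomparable
  exact hF v hvs hvu hcomparable

section HOSpace

variable {p : ℕ} {μ : Measure (Fin p → ℝ)} {u v : Finset (Fin p)} {h g : (Fin p → ℝ) → ℝ}

lemma mem_HOSpace_iff : h ∈ HOSpace μ u ↔ Measurable h ∧ MemLp h 2 μ ∧ DependsOnly h u ∧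
    ∀ v : Finset (Fin p), v ⊂ u → ∀ g ∈ HOSpace μ v, ∫ x, h x * g x ∂μ = 0 := by
  rw [HOSpace]
  rfl

lemma memLp_of_mem_HOSpace (hh : h ∈ HOSpace μ u) : MemLp h 2 μ :=
  (mem_HOSpace_iff.mp hh).2.1

lemma integral_mul_eq_zero_of_mem_HOSpace (hh : h ∈ HOSpace μ u) (hvu : v ⊂ u)
    (hg : g ∈ HOSpace μ v) : ∫ x, h x * g x ∂μ = 0 :=
  (mem_HOSpace_iff.mp hh).2.2.2 v hvu g hg

lemma eq_const_of_mem_HOSpace_empty (hh : h ∈ HOSpace μ ∅) : h = fun _ => h 0 :=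
  funext fun x => (mem_HOSpace_iff.mp hh).2.2.1 x 0 (by simp)

lemma const_mem_HOSpace_empty [IsFiniteMeasure μ] (k : ℝ) : (fun _ => k) ∈ HOSpace μ ∅ :=
  mem_HOSpace_iff.mpr ⟨measurable_const, memLp_const k, fun _ _ _ => rfl,
    fun v hv => absurd hv (Finset.not_ssubset_empty v)⟩

lemma integral_eq_zero_of_mem_HOSpace [IsFiniteMeasure μ] (hh : h ∈ HOSpace μ u)
    (hu : u ≠ ∅) : ∫ x, h x ∂μ = 0 := by
  simpa using integral_mul_eq_zero_of_mem_HOSpace hh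
    (Finset.empty_ssubset.mpr (Finset.nonempty_iff_ne_empty.mpr hu)) (const_mem_HOSpace_empty 1)

lemma covariance_eq_zero_of_mem_HOSpace_of_ssubset [IsProbabilityMeasure μ]
    (hh : h ∈ HOSpace μ u) (hg : g ∈ HOSpace μ v) (hvu : v ⊂ u) : cov[h, g; μ] = 0 := by
  have hu : u ≠ ∅ :=
    (Finset.empty_ssubset.mp ((Finset.empty_subset v).trans_ssubset hvu)).ne_empty
  rw [covariance_eq_sub (memLp_of_mem_HOSpace hh) (memLp_of_mem_HOSpace hg)]
  simp only [Pi.mul_apply, integral_mul_eq_zero_of_mem_HOSpace hh hvu hg,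
    integral_eq_zero_of_mem_HOSpace hh hu, zero_mul, sub_zero]

lemma covariance_eq_zero_of_mem_HOSpace_of_ne_of_comparable [IsProbabilityMeasure μ]
    (hh : h ∈ HOSpace μ u) (hg : g ∈ HOSpace μ v) (hvu : v ≠ u) (huv : u ⊆ v ∨ v ⊆ u) :
    cov[h, g; μ] = 0 := by
  rcases huv with huv | hsub
  · rw [covariance_comm]
    exact covariance_eq_zero_of_mem_HOSpace_of_ssubset hg hh (ssubset_of_subset_of_ne huv hvu.symm)
  · exact covariance_eq_zero_of_mem_HOSpace_of_ssubset hh hg (ssubset_of_subset_of_ne hsub hvu)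

end HOSpace

open Finset in
/-- the HOFD components satisfy `E[η_u·η_v] = 0` for `v ⊂ u`, each
nonempty component has zero mean, and the variance of `Y = Σ_u η_u` decomposes as
`V(Y) = Σ_{u≠∅} [V(η_u) + Σ_{v : u∩v≠u, u∩v≠v} Cov(η_u, η_v)]`. -/
theorem hofd_variance_decomposition
    {p : ℕ} (μ : Measure (Fin p → ℝ)) [IsProbabilityMeasure μ]
    (η : (Fin p → ℝ) → ℝ)
    (c : Finset (Fin p) → (Fin p → ℝ) → ℝ)
    (hc : ∀ u, c u ∈ HOSpace μ u)
    (hdecomp : η =ᵐ[μ] fun x => ∑ u ∈ (Finset.univ : Finset (Fin p)).powerset, c u x) :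
    (∀ u v : Finset (Fin p), v ⊂ u → ∫ x, c u x * c v x ∂μ = 0) ∧
    (∀ u : Finset (Fin p), u ≠ ∅ → ∫ x, c u x ∂μ = 0) ∧
    rvVar μ η = ∑ u ∈ ((Finset.univ : Finset (Fin p)).powerset.erase ∅),
      (rvVar μ (c u) +
        ∑ v ∈ (Finset.univ : Finset (Fin p)).powerset.filter
          (fun v => u ∩ v ≠ u ∧ u ∩ v ≠ v), rvCov μ (c u) (c v)) := by
  have hL2 : ∀ u ∈ univ.powerset, MemLp (c u) 2 μ := fun u _ => memLp_of_mem_HOSpace (hc u)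
  refine ⟨fun u v hvu => integral_mul_eq_zero_of_mem_HOSpace (hc u) hvu (hc v),
    fun u hu => integral_eq_zero_of_mem_HOSpace (hc u) hu, ?_⟩
  simp only [rvVar_eq_covariance_self, rvCov_eq_covariance]
  rw [covariance_congr_ae hdecomp hdecomp, covariance_fun_sum_fun_sum' hL2 hL2,
    ← add_sum_erase _ _ (empty_mem_powerset _), eq_const_of_mem_HOSpace_empty (hc ∅)]
  simp only [covariance_const_left, sum_const_zero, zero_add]
  exact sum_congr rfl fun u _ => sum_eq_add_sum_filter_incomparable _
    (mem_powerset.mpr (subset_univ u)) _ fun v _ hvu huv =>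
      covariance_eq_zero_of_mem_HOSpace_of_ne_of_comparable (hc u) (hc v) hvu huv
end
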